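/- The map m : S^7 × S^7 → S^7 defined by m(x,y) = σ̃_x(y)/‖σ̃_x(y)‖ is well defined (σ̃_x(y) ≠ 0 for x, y ∈ S^7), continuous, and has e as a two-sided identity; thus S^7 is an H-space whenever S^6 admits an almost complex structure. -/

import Mathlib

/-! Since `J̃_y` is an orthogonal complex structure, `σ̃_x = α·Id + β·J̃_y` satisfies
`‖σ̃_x z‖² = (α² + β²)‖z‖²`, so `‖σ̃_x z‖ = ‖x‖‖z‖`: on `S⁷ × S⁷` the product never vanishes
and needs no normalisation. For continuity, `β·J̃_y z` is the homogeneous extension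
`v ↦ ‖v‖·J̃_{v/‖v‖} z` of `J` evaluated at `v = x - ⟨x,e⟩e`; it has norm `‖v‖‖z‖`, hence is
continuous also where `v = 0`. -/

open scoped RealInnerProductSpace Classical

/-- The Kirchhoff map `σ̃_x(z)`: writing `x = α·e + b` with `α = ⟨x,e⟩` and `b ⊥ e`,
`σ̃_x = α·Id + ‖b‖·J̃_{b/‖b‖}` (and `σ̃_x = α·Id` when `b = 0`), where `J : y ↦ J̃_y`
assigns to each unit vector `y ⊥ e` the extended complex structure of Kirchhoff's
construction from an almost complex structure on `S⁶`. -/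
noncomputable def kirchhoffMul {V : Type*} [NormedAddCommGroup V] [InnerProductSpace ℝ V]
    (J : V → V →ₗ[ℝ] V) (e x z : V) : V :=
  if x - ⟪x, e⟫ • e = (0 : V) then ⟪x, e⟫ • z
  else ⟪x, e⟫ • z + ‖x - ⟪x, e⟫ • e‖ •
    (J (‖x - ⟪x, e⟫ • e‖⁻¹ • (x - ⟪x, e⟫ • e))) z

section

variable {V : Type*} [NormedAddCommGroup V] [InnerProductSpace ℝ V]

theorem inner_self_apply_eq_zero_of_orthogonal_of_sq_eq_neg {A : V →ₗ[ℝ] V}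
    (hA : ∀ u v, ⟪A u, A v⟫ = ⟪u, v⟫) (hA2 : ∀ u, A (A u) = -u) (u : V) : ⟪u, A u⟫ = 0 := by
  have h := hA u (A u)
  rw [hA2, inner_neg_right, real_inner_comm u (A u)] at h
  linarith

theorem inner_sub_inner_smul_self {e : V} (he : ‖e‖ = 1) (x : V) : ⟪x - ⟪x, e⟫ • e, e⟫ = 0 := by
  rw [inner_sub_left, real_inner_smul_left, real_inner_self_eq_norm_sq, he]
  ring

theorem sq_inner_add_sq_norm_sub_inner_smul {e : V} (he : ‖e‖ = 1) (x : V) :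
    ⟪x, e⟫ ^ 2 + ‖x - ⟪x, e⟫ • e‖ ^ 2 = ‖x‖ ^ 2 := by
  have horth : ⟪x - ⟪x, e⟫ • e, ⟪x, e⟫ • e⟫ = 0 := by
    rw [real_inner_smul_right, inner_sub_inner_smul_self he, mul_zero]
  have h := norm_add_sq_real (x - ⟪x, e⟫ • e) (⟪x, e⟫ • e)
  rw [sub_add_cancel, horth, norm_smul, he, mul_one, Real.norm_eq_abs, sq_abs] at h
  linarith

noncomputable def kirchhoffImag (J : V → V →ₗ[ℝ] V) (v z : V) : V :=
  ‖v‖ • J (‖v‖⁻¹ • v) z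

theorem kirchhoffMul_eq (J : V → V →ₗ[ℝ] V) (e x z : V) :
    kirchhoffMul J e x z = ⟪x, e⟫ • z + kirchhoffImag J (x - ⟪x, e⟫ • e) z := by
  unfold kirchhoffMul kirchhoffImag
  split_ifs with h
  · simp [h]
  · rfl

variable {e : V} {J : V → V →ₗ[ℝ] V}

theorem inv_norm_smul_unit_and_orthogonal {v : V} (hv : ⟪v, e⟫ = 0) (hv0 : v ≠ 0) :
    ‖‖v‖⁻¹ • v‖ = 1 ∧ ⟪‖v‖⁻¹ • v, e⟫ = 0 :=
  ⟨norm_smul_inv_norm hv0, by rw [real_inner_smul_left, hv, mul_zero]⟩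

theorem norm_kirchhoffImag (horth : ∀ y, ‖y‖ = 1 → ⟪y, e⟫ = 0 → ∀ u v, ⟪J y u, J y v⟫ = ⟪u, v⟫)
    {v : V} (hv : ⟪v, e⟫ = 0) (z : V) : ‖kirchhoffImag J v z‖ = ‖v‖ * ‖z‖ := by
  rcases eq_or_ne v 0 with rfl | hv0
  · simp [kirchhoffImag]
  obtain ⟨hy1, hy2⟩ := inv_norm_smul_unit_and_orthogonal hv hv0
  rw [kirchhoffImag, norm_smul, norm_norm]
  exact congrArg _ (((J _).isometryOfInner (horth _ hy1 hy2)).norm_map z)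

theorem inner_kirchhoffImag_self
    (horth : ∀ y, ‖y‖ = 1 → ⟪y, e⟫ = 0 → ∀ u v, ⟪J y u, J y v⟫ = ⟪u, v⟫)
    (hJ2 : ∀ y, ‖y‖ = 1 → ⟪y, e⟫ = 0 → ∀ u, J y (J y u) = -u)
    {v : V} (hv : ⟪v, e⟫ = 0) (z : V) : ⟪z, kirchhoffImag J v z⟫ = 0 := by
  rcases eq_or_ne v 0 with rfl | hv0
  · simp [kirchhoffImag]
  obtain ⟨hy1, hy2⟩ := inv_norm_smul_unit_and_orthogonal hv hv0
  rw [kirchhoffImag, real_inner_smul_right,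
    inner_self_apply_eq_zero_of_orthogonal_of_sq_eq_neg (horth _ hy1 hy2) (hJ2 _ hy1 hy2), mul_zero]

theorem norm_kirchhoffMul (he : ‖e‖ = 1)
    (horth : ∀ y, ‖y‖ = 1 → ⟪y, e⟫ = 0 → ∀ u v, ⟪J y u, J y v⟫ = ⟪u, v⟫)
    (hJ2 : ∀ y, ‖y‖ = 1 → ⟪y, e⟫ = 0 → ∀ u, J y (J y u) = -u) (x z : V) :
    ‖kirchhoffMul J e x z‖ = ‖x‖ * ‖z‖ := by
  have hb := inner_sub_inner_smul_self he x
  have hsq : ‖kirchhoffMul J e x z‖ ^ 2 = (‖x‖ * ‖z‖) ^ 2 := by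
    rw [kirchhoffMul_eq, norm_add_sq_real, real_inner_smul_left,
      inner_kirchhoffImag_self horth hJ2 hb, norm_kirchhoffImag horth hb, norm_smul,
      Real.norm_eq_abs, mul_pow, mul_pow, mul_pow, sq_abs,
      ← sq_inner_add_sq_norm_sub_inner_smul he x]
    ring
  exact (sq_eq_sq₀ (norm_nonneg _) (by positivity)).1 hsq

theorem continuousOn_kirchhoffImag
    (horth : ∀ y, ‖y‖ = 1 → ⟪y, e⟫ = 0 → ∀ u v, ⟪J y u, J y v⟫ = ⟪u, v⟫)
    (hJcont : ContinuousOn (fun p : V × V => J p.1 p.2) ({y | ‖y‖ = 1 ∧ ⟪y, e⟫ = 0} ×ˢ Set.univ)) :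
    ContinuousOn (fun p : V × V => kirchhoffImag J p.1 p.2) ({v | ⟪v, e⟫ = 0} ×ˢ Set.univ) := by
  rintro ⟨v, z⟩ ⟨hv, -⟩
  rcases eq_or_ne v 0 with rfl | hv0
  · rw [ContinuousWithinAt, show kirchhoffImag J 0 z = 0 by simp [kirchhoffImag]]
    refine squeeze_zero_norm' (a := fun p : V × V => ‖p.1‖ * ‖p.2‖) ?_ ?_
    · filter_upwards [self_mem_nhdsWithin] with p hp
      exact (norm_kirchhoffImag horth hp.1 p.2).le
    · simpa using ((by fun_prop : Continuous fun p : V × V => ‖p.1‖ * ‖p.2‖).tendsto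
        ((0 : V), z)).mono_left nhdsWithin_le_nhds
  · have hne : {p : V × V | p.1 ≠ 0} ∈ nhds (v, z) :=
      (isOpen_ne_fun continuous_fst continuous_const).mem_nhds hv0
    have hnormalize : ContinuousAt (fun p : V × V => (‖p.1‖⁻¹ • p.1, p.2)) (v, z) :=
      ((continuous_fst.norm.continuousAt.inv₀ (norm_ne_zero_iff.2 hv0)).smul
        continuous_fst.continuousAt).prodMk continuous_snd.continuousAt
    have hmaps : Set.MapsTo (fun p : V × V => (‖p.1‖⁻¹ • p.1, p.2))
        ({v | ⟪v, e⟫ = 0} ×ˢ Set.univ ∩ {p | p.1 ≠ 0}) ({y | ‖y‖ = 1 ∧ ⟪y, e⟫ = 0} ×ˢ Set.univ) :=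
      fun p hp => ⟨inv_norm_smul_unit_and_orthogonal hp.1.1 hp.2, trivial⟩
    have hJnormalize : ContinuousWithinAt (fun p : V × V => J (‖p.1‖⁻¹ • p.1) p.2)
        ({v | ⟪v, e⟫ = 0} ×ˢ Set.univ ∩ {p | p.1 ≠ 0}) (v, z) :=
      ContinuousWithinAt.comp (g := fun p : V × V => J p.1 p.2) (x := (v, z))
        (hJcont (‖v‖⁻¹ • v, z) ⟨inv_norm_smul_unit_and_orthogonal hv hv0, trivial⟩)
        hnormalize.continuousWithinAt hmaps
    exact continuous_fst.norm.continuousWithinAt.smul ((continuousWithinAt_inter hne).1 hJnormalize)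

theorem continuous_kirchhoffMul (he : ‖e‖ = 1)
    (horth : ∀ y, ‖y‖ = 1 → ⟪y, e⟫ = 0 → ∀ u v, ⟪J y u, J y v⟫ = ⟪u, v⟫)
    (hJcont : ContinuousOn (fun p : V × V => J p.1 p.2) ({y | ‖y‖ = 1 ∧ ⟪y, e⟫ = 0} ×ˢ Set.univ)) :
    Continuous fun p : V × V => kirchhoffMul J e p.1 p.2 := by
  simp only [kirchhoffMul_eq]
  refine (by fun_prop : Continuous fun p : V × V => ⟪p.1, e⟫ • p.2).add ?_
  exact (continuousOn_kirchhoffImag horth hJcont).comp_continuous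
    (f := fun p : V × V => (p.1 - ⟪p.1, e⟫ • e, p.2)) (by fun_prop)
    fun p => ⟨inner_sub_inner_smul_self he p.1, trivial⟩

theorem kirchhoffMul_self_left (he : ‖e‖ = 1) (z : V) : kirchhoffMul J e e z = z := by
  rw [kirchhoffMul_eq, real_inner_self_eq_norm_sq, he]
  simp [kirchhoffImag]

theorem kirchhoffMul_self_right (he : ‖e‖ = 1) (hJe : ∀ y, ‖y‖ = 1 → ⟪y, e⟫ = 0 → J y e = y)
    (x : V) : kirchhoffMul J e x e = x := by
  rw [kirchhoffMul_eq, kirchhoffImag]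
  rcases eq_or_ne (x - ⟪x, e⟫ • e) 0 with hb | hb
  · rw [hb, norm_zero, zero_smul, add_zero]
    exact (sub_eq_zero.1 hb).symm
  obtain ⟨hy1, hy2⟩ := inv_norm_smul_unit_and_orthogonal (inner_sub_inner_smul_self he x) hb
  rw [hJe _ hy1 hy2, smul_inv_smul₀ (norm_ne_zero_iff.2 hb), add_sub_cancel]

end

theorem kirchhoff_stmt16_general
    (e : EuclideanSpace ℝ (Fin 8)) (he : ‖e‖ = 1)
    (J : EuclideanSpace ℝ (Fin 8) → EuclideanSpace ℝ (Fin 8) →ₗ[ℝ] EuclideanSpace ℝ (Fin 8))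
    (horth : ∀ y, ‖y‖ = 1 → ⟪y, e⟫ = 0 → ∀ u v, ⟪J y u, J y v⟫ = ⟪u, v⟫)
    (hJ2 : ∀ y, ‖y‖ = 1 → ⟪y, e⟫ = 0 → ∀ u, J y (J y u) = -u)
    (hJe : ∀ y, ‖y‖ = 1 → ⟪y, e⟫ = 0 → J y e = y)
    (hJcont : ContinuousOn
      (fun p : EuclideanSpace ℝ (Fin 8) × EuclideanSpace ℝ (Fin 8) => J p.1 p.2)
      ({y | ‖y‖ = 1 ∧ ⟪y, e⟫ = 0} ×ˢ Set.univ)) :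
    (∀ x z : EuclideanSpace ℝ (Fin 8), ‖x‖ = 1 → ‖z‖ = 1 → kirchhoffMul J e x z ≠ 0)
      ∧ ContinuousOn
          (fun p : EuclideanSpace ℝ (Fin 8) × EuclideanSpace ℝ (Fin 8) =>
            ‖kirchhoffMul J e p.1 p.2‖⁻¹ • kirchhoffMul J e p.1 p.2)
          (Metric.sphere 0 1 ×ˢ Metric.sphere 0 1)
      ∧ (∀ x z : EuclideanSpace ℝ (Fin 8), ‖x‖ = 1 → ‖z‖ = 1 →
          ‖‖kirchhoffMul J e x z‖⁻¹ • kirchhoffMul J e x z‖ = 1)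
      ∧ (∀ z : EuclideanSpace ℝ (Fin 8), ‖z‖ = 1 →
          ‖kirchhoffMul J e e z‖⁻¹ • kirchhoffMul J e e z = z
            ∧ ‖kirchhoffMul J e z e‖⁻¹ • kirchhoffMul J e z e = z) := by
  have hnorm : ∀ x z : EuclideanSpace ℝ (Fin 8), ‖x‖ = 1 → ‖z‖ = 1 →
      ‖kirchhoffMul J e x z‖ = 1 := fun x z hx hz => by
    rw [norm_kirchhoffMul he horth hJ2, hx, hz, one_mul]
  have hnormalize : ∀ x z : EuclideanSpace ℝ (Fin 8), ‖x‖ = 1 → ‖z‖ = 1 →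
      ‖kirchhoffMul J e x z‖⁻¹ • kirchhoffMul J e x z = kirchhoffMul J e x z := fun x z hx hz => by
    rw [hnorm x z hx hz, inv_one, one_smul]
  refine ⟨fun x z hx hz => norm_ne_zero_iff.1 (by rw [hnorm x z hx hz]; exact one_ne_zero), ?_,
    fun x z hx hz => by rw [hnormalize x z hx hz, hnorm x z hx hz], fun z hz => ?_⟩
  · refine (continuous_kirchhoffMul he horth hJcont).continuousOn.congr fun p ⟨hp1, hp2⟩ => ?_
    exact hnormalize p.1 p.2 (mem_sphere_zero_iff_norm.1 hp1) (mem_sphere_zero_iff_norm.1 hp2)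
  · rw [hnormalize e z he hz, hnormalize z e hz he, kirchhoffMul_self_left he,
      kirchhoffMul_self_right he hJe]
    exact ⟨rfl, rfl⟩

/-- the map `m : S⁷ × S⁷ → S⁷`, `m(x,y) = σ̃_x(y)/‖σ̃_x(y)‖`, is well defined
(`σ̃_x(y) ≠ 0` for `x, y ∈ S⁷`), continuous, and has `e` as a two-sided identity; thus `S⁷`
is an `H`-space whenever `S⁶` admits an almost complex structure. -/
theorem kirchhoff_stmt16
    (e : EuclideanSpace ℝ (Fin 8)) (he : ‖e‖ = 1)
    (J : EuclideanSpace ℝ (Fin 8) → EuclideanSpace ℝ (Fin 8) →ₗ[ℝ] EuclideanSpace ℝ (Fin 8))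
    (horth : ∀ y, ‖y‖ = 1 → ⟪y, e⟫ = 0 → ∀ u v, ⟪J y u, J y v⟫ = ⟪u, v⟫)
    (hJ2 : ∀ y, ‖y‖ = 1 → ⟪y, e⟫ = 0 → ∀ u, J y (J y u) = -u)
    (hJe : ∀ y, ‖y‖ = 1 → ⟪y, e⟫ = 0 → J y e = y)
    (hJy : ∀ y, ‖y‖ = 1 → ⟪y, e⟫ = 0 → J y y = -e)
    (hJcont : ContinuousOn
      (fun p : EuclideanSpace ℝ (Fin 8) × EuclideanSpace ℝ (Fin 8) => J p.1 p.2)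
      ({y | ‖y‖ = 1 ∧ ⟪y, e⟫ = 0} ×ˢ Set.univ)) :
    (∀ x z : EuclideanSpace ℝ (Fin 8), ‖x‖ = 1 → ‖z‖ = 1 → kirchhoffMul J e x z ≠ 0)
      ∧ ContinuousOn
          (fun p : EuclideanSpace ℝ (Fin 8) × EuclideanSpace ℝ (Fin 8) =>
            ‖kirchhoffMul J e p.1 p.2‖⁻¹ • kirchhoffMul J e p.1 p.2)
          (Metric.sphere 0 1 ×ˢ Metric.sphere 0 1)
      ∧ (∀ x z : EuclideanSpace ℝ (Fin 8), ‖x‖ = 1 → ‖z‖ = 1 →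
          ‖‖kirchhoffMul J e x z‖⁻¹ • kirchhoffMul J e x z‖ = 1)
      ∧ (∀ z : EuclideanSpace ℝ (Fin 8), ‖z‖ = 1 →
          ‖kirchhoffMul J e e z‖⁻¹ • kirchhoffMul J e e z = z
            ∧ ‖kirchhoffMul J e z e‖⁻¹ • kirchhoffMul J e z e = z) :=
  kirchhoff_stmt16_general e he J horth hJ2 hJe hJcont
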